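/- Let (X,Y) be discrete with joint distribution μ, η : 𝒳 → 𝒰, U = η(X). Then for any conditional distribution v from 𝒰 to distributions on 𝒴, E[−log v(Y|η(X))] ≥ I(X;Y|U) + H(Y|X), with equality if and only if v(·|u) = μ_{Y|U}(·|u) for every u with μ_U(u) > 0. -/

import Mathlib

open Finset

noncomputable section

/-- Marginal distribution of the first coordinate of a joint distribution. -/
def margX {X Y : Type*} [Fintype Y] (μ : X → Y → ℝ) (x : X) : ℝ := ∑ y, μ x y

/-- Marginal distribution of the second coordinate. -/
def margY {X Y : Type*} [Fintype X] (μ : X → Y → ℝ) (y : Y) : ℝ := ∑ x, μ x y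

/-- Distribution of `U = η X`. -/
def margU {X Y U : Type*} [Fintype X] [Fintype Y] [DecidableEq U]
    (μ : X → Y → ℝ) (η : X → U) (u : U) : ℝ :=
  ∑ x, if η x = u then margX μ x else 0

/-- Joint probability `P(Y = y, η X = u)`. -/
def margYU {X Y U : Type*} [Fintype X] [DecidableEq U]
    (μ : X → Y → ℝ) (η : X → U) (y : Y) (u : U) : ℝ :=
  ∑ x, if η x = u then μ x y else 0

/-- Joint distribution of the pair `(η X, Y)`. -/
def jointUY {X Y U : Type*} [Fintype X] [DecidableEq U]
    (μ : X → Y → ℝ) (η : X → U) : U → Y → ℝ :=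
  fun u y => margYU μ η y u

/-- Shannon mutual information `I(X;Y)` of a joint distribution (natural log). -/
def MI {X Y : Type*} [Fintype X] [Fintype Y] (μ : X → Y → ℝ) : ℝ :=
  ∑ x, ∑ y, μ x y * Real.log (μ x y / (margX μ x * margY μ y))

/-- Conditional Shannon entropy `H(Y|X)`. -/
def condEnt {X Y : Type*} [Fintype X] [Fintype Y] (μ : X → Y → ℝ) : ℝ :=
  -∑ x, ∑ y, μ x y * Real.log (μ x y / margX μ x)

/-- Conditional mutual information `I(X;Y|U)` where `U = η X` is a deterministic
function of `X`. -/
def condMI {X Y U : Type*} [Fintype X] [Fintype Y] [DecidableEq U]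
    (μ : X → Y → ℝ) (η : X → U) : ℝ :=
  ∑ x, ∑ y, μ x y *
    Real.log (μ x y * margU μ η (η x) / (margX μ x * margYU μ η y (η x)))

/-- `μ` is a probability distribution on `X × Y`. -/
def IsDist {X Y : Type*} [Fintype X] [Fintype Y] (μ : X → Y → ℝ) : Prop :=
  (∀ x y, 0 ≤ μ x y) ∧ ∑ x, ∑ y, μ x y = 1

/-- `X` and `Y` are conditionally independent given `U = η X`: for every `u` with
`P(U = u) > 0`, `P(X = x, Y = y | U = u) = P(X = x | U = u) · P(Y = y | U = u)`
(stated multiplied through by `P(U = u)²`). -/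
def CondIndep {X Y U : Type*} [Fintype X] [Fintype Y] [DecidableEq U]
    (μ : X → Y → ℝ) (η : X → U) : Prop :=
  ∀ u, 0 < margU μ η u → ∀ x y,
    (if η x = u then μ x y else 0) * margU μ η u =
      (if η x = u then margX μ x else 0) * margYU μ η y u

/-- Cross-entropy risk `E_{(X,Y)∼μ}[− log v(Y|X)]` of a predictive conditional
distribution `v`. -/
def risk {X Y : Type*} [Fintype X] [Fintype Y] (μ : X → Y → ℝ) (v : X → Y → ℝ) : ℝ :=
  ∑ x, ∑ y, μ x y * (-Real.log (v x y))

/-- Kullback–Leibler divergence between two joint distributions on `X × Y`. -/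
def KL {X Y : Type*} [Fintype X] [Fintype Y] (μ ν : X → Y → ℝ) : ℝ :=
  ∑ x, ∑ y, μ x y * Real.log (μ x y / ν x y)

/-- Averaged conditional KL divergence `D(μ_{Y|X} ‖ v | μ_X)`. -/
def avgKL {X Y : Type*} [Fintype X] [Fintype Y] (μ : X → Y → ℝ) (v : X → Y → ℝ) : ℝ :=
  ∑ x, margX μ x * ∑ y,
    (μ x y / margX μ x) * Real.log ((μ x y / margX μ x) / v x y)

/-- Averaged conditional KL divergence in the latent domain:
`D(μ_{Y|U} ‖ v | μ_U)` for the encoder `η`. -/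
def decKL {X Y U : Type*} [Fintype X] [Fintype Y] [Fintype U] [DecidableEq U]
    (μ : X → Y → ℝ) (η : X → U) (v : U → Y → ℝ) : ℝ :=
  ∑ u, margU μ η u * ∑ y,
    (margYU μ η y u / margU μ η u) *
      Real.log ((margYU μ η y u / margU μ η u) / v u y)

/-!
Writing `c(u, y) = μ(η X = u, Y = y)`, the logarithms in `I(X;Y|U)` and `H(Y|X)` telescope
against `-log v(y | η x)`, leaving `E[-log v(Y|U)] = I(X;Y|U) + H(Y|X) + D(μ_{Y|U} ‖ v | μ_U)`.
The last term is `∑ c(u,y) log (c(u,y) / (μ_U(u) v(y|u)))`, a Gibbs sum for the two weights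
`c` and `μ_U ⊗ v` on `U × Y`, which have the same total mass; it is nonnegative and vanishes
iff `c(u,y) = μ_U(u) v(y|u)` everywhere.
-/

open Real InformationTheory

section Gibbs

variable {ι : Type*} [Fintype ι] {p q : ι → ℝ}

lemma mul_log_div_sub_add_eq_mul_klFun {a b : ℝ} (hb : b ≠ 0) :
    a * log (a / b) - a + b = b * klFun (a / b) := by
  rw [klFun, mul_sub, mul_add, ← mul_assoc, mul_div_cancel₀ a hb]
  ring

theorem sum_mul_log_div_eq_sum_mul_klFun (hsum : ∑ i, p i = ∑ i, q i)
    (hpq : ∀ i, q i = 0 → p i = 0) :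
    ∑ i, p i * log (p i / q i) = ∑ i, q i * klFun (p i / q i) := by
  calc ∑ i, p i * log (p i / q i) = ∑ i, (p i * log (p i / q i) - p i + q i) := by
        rw [Finset.sum_add_distrib, Finset.sum_sub_distrib, hsum, sub_add_cancel]
    _ = ∑ i, q i * klFun (p i / q i) := by
        refine Finset.sum_congr rfl fun i _ => ?_
        by_cases hq : q i = 0
        · simp [hq, hpq i hq]
        · exact mul_log_div_sub_add_eq_mul_klFun hq

theorem sum_mul_log_div_nonneg (hp : ∀ i, 0 ≤ p i) (hq : ∀ i, 0 ≤ q i)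
    (hsum : ∑ i, p i = ∑ i, q i) (hpq : ∀ i, q i = 0 → p i = 0) :
    0 ≤ ∑ i, p i * log (p i / q i) := by
  rw [sum_mul_log_div_eq_sum_mul_klFun hsum hpq]
  exact Finset.sum_nonneg fun i _ => mul_nonneg (hq i) (klFun_nonneg (div_nonneg (hp i) (hq i)))

theorem sum_mul_log_div_eq_zero_iff (hp : ∀ i, 0 ≤ p i) (hq : ∀ i, 0 ≤ q i)
    (hsum : ∑ i, p i = ∑ i, q i) (hpq : ∀ i, q i = 0 → p i = 0) :
    ∑ i, p i * log (p i / q i) = 0 ↔ ∀ i, p i = q i := by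
  rw [sum_mul_log_div_eq_sum_mul_klFun hsum hpq, Finset.sum_eq_zero_iff_of_nonneg
    fun i _ => mul_nonneg (hq i) (klFun_nonneg (div_nonneg (hp i) (hq i)))]
  refine forall_congr' fun i => ?_
  rcases (hq i).eq_or_lt with hqi | hqi
  · simp [← hqi, hpq i hqi.symm]
  · rw [mul_eq_zero, klFun_eq_zero_iff (div_nonneg (hp i) (hq i)), div_eq_one_iff_eq hqi.ne']
    simp [hqi.ne']

end Gibbs

section Marginals

lemma le_margX {X Y : Type*} [Fintype Y] {μ : X → Y → ℝ} (hμ : ∀ x y, 0 ≤ μ x y) (x : X)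
    (y : Y) : μ x y ≤ margX μ x :=
  Finset.single_le_sum (fun y _ => hμ x y) (Finset.mem_univ y)

variable {X Y U : Type*} [Fintype X] [DecidableEq U] {μ : X → Y → ℝ} (η : X → U)

lemma margYU_eq_sum_filter (μ : X → Y → ℝ) (y : Y) (u : U) :
    margYU μ η y u = ∑ x with η x = u, μ x y :=
  (Finset.sum_filter _ _).symm

lemma margYU_nonneg (hμ : ∀ x y, 0 ≤ μ x y) (y : Y) (u : U) : 0 ≤ margYU μ η y u := by
  rw [margYU_eq_sum_filter]
  exact Finset.sum_nonneg fun x _ => hμ x y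

lemma le_margYU (hμ : ∀ x y, 0 ≤ μ x y) (x : X) (y : Y) : μ x y ≤ margYU μ η y (η x) := by
  rw [margYU_eq_sum_filter]
  exact Finset.single_le_sum (fun x _ => hμ x y) (by simp)

lemma sum_sum_mul_comp_eq_sum_sum_margYU [Fintype Y] [Fintype U] (μ : X → Y → ℝ)
    (f : U → Y → ℝ) : ∑ x, ∑ y, μ x y * f (η x) y = ∑ u, ∑ y, margYU μ η y u * f u y := by
  rw [Finset.sum_comm, Finset.sum_comm (γ := U)]
  refine Finset.sum_congr rfl fun y _ => ?_
  rw [← Finset.sum_fiberwise _ η]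
  refine Finset.sum_congr rfl fun u _ => ?_
  rw [margYU_eq_sum_filter, Finset.sum_mul]
  exact Finset.sum_congr rfl fun x hx => by rw [(Finset.mem_filter.1 hx).2]

variable [Fintype Y]

lemma sum_margYU (μ : X → Y → ℝ) (u : U) : ∑ y, margYU μ η y u = margU μ η u := by
  simp only [margYU, margU, margX]
  rw [Finset.sum_comm]
  exact Finset.sum_congr rfl fun x _ => by split_ifs <;> simp

lemma margU_nonneg (hμ : ∀ x y, 0 ≤ μ x y) (u : U) : 0 ≤ margU μ η u := by
  rw [← sum_margYU]
  exact Finset.sum_nonneg fun y _ => margYU_nonneg η hμ y u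

lemma margYU_le_margU (hμ : ∀ x y, 0 ≤ μ x y) (y : Y) (u : U) :
    margYU μ η y u ≤ margU μ η u := by
  rw [← sum_margYU]
  exact Finset.single_le_sum (fun y _ => margYU_nonneg η hμ y u) (Finset.mem_univ y)

lemma margYU_eq_zero_of_margU_mul_eq_zero {v : U → Y → ℝ} (hμ : ∀ x y, 0 ≤ μ x y)
    (hv : ∀ u y, 0 < margYU μ η y u → 0 < v u y) {u : U} {y : Y}
    (h : margU μ η u * v u y = 0) : margYU μ η y u = 0 := by
  refine le_antisymm ?_ (margYU_nonneg η hμ y u)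
  rcases mul_eq_zero.1 h with hU | hvuy
  · exact hU ▸ margYU_le_margU η hμ y u
  · exact not_lt.1 fun hYU => (hv u y hYU).ne' hvuy

end Marginals

section Decomposition

variable {X Y U : Type*} [Fintype X] [Fintype Y] [Fintype U] [DecidableEq U]
  {μ : X → Y → ℝ} {η : X → U} {v : U → Y → ℝ}

lemma decKL_eq_sum_sum (hμ : ∀ x y, 0 ≤ μ x y) :
    decKL μ η v =
      ∑ u, ∑ y, margYU μ η y u * log (margYU μ η y u / (margU μ η u * v u y)) := by
  refine Finset.sum_congr rfl fun u _ => ?_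
  rw [Finset.mul_sum]
  refine Finset.sum_congr rfl fun y _ => ?_
  rw [div_div, ← mul_assoc, mul_div_cancel_of_imp' fun h => ?_]
  exact le_antisymm (h ▸ margYU_le_margU η hμ y u) (margYU_nonneg η hμ y u)

theorem risk_comp_eq_condMI_add_condEnt_add_decKL (hμ : ∀ x y, 0 ≤ μ x y)
    (hv : ∀ u y, 0 < margYU μ η y u → 0 < v u y) :
    risk μ (fun x y => v (η x) y) = condMI μ η + condEnt μ + decKL μ η v := by
  rw [decKL_eq_sum_sum hμ, ← sum_sum_mul_comp_eq_sum_sum_margYU, risk, condMI, condEnt]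
  simp only [← Finset.sum_neg_distrib, ← Finset.sum_add_distrib]
  refine Finset.sum_congr rfl fun x _ => Finset.sum_congr rfl fun y _ => ?_
  rcases (hμ x y).eq_or_lt with hzero | hpos
  · simp [← hzero]
  have hX := hpos.trans_le (le_margX hμ x y)
  have hYU := hpos.trans_le (le_margYU η hμ x y)
  have hU := hYU.trans_le (margYU_le_margU η hμ y (η x))
  have hv := hv _ _ hYU
  rw [log_div (by positivity) (by positivity), log_div (by positivity) (by positivity),
    log_div (by positivity) (by positivity), log_mul hpos.ne' hU.ne',
    log_mul hX.ne' hYU.ne', log_mul hU.ne' hv.ne']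
  ring

lemma sum_margYU_eq_sum_margU_mul (hv1 : ∀ u, ∑ y, v u y = 1) :
    ∑ w : U × Y, margYU μ η w.2 w.1 = ∑ w : U × Y, margU μ η w.1 * v w.1 w.2 := by
  simp only [Fintype.sum_prod_type, ← Finset.mul_sum, hv1, mul_one, sum_margYU]

theorem decKL_nonneg (hμ : ∀ x y, 0 ≤ μ x y) (hv0 : ∀ u y, 0 ≤ v u y)
    (hv1 : ∀ u, ∑ y, v u y = 1) (hv : ∀ u y, 0 < margYU μ η y u → 0 < v u y) :
    0 ≤ decKL μ η v := by
  rw [decKL_eq_sum_sum hμ, ← Fintype.sum_prod_type']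
  exact sum_mul_log_div_nonneg (fun w => margYU_nonneg η hμ w.2 w.1)
    (fun w => mul_nonneg (margU_nonneg η hμ w.1) (hv0 w.1 w.2))
    (sum_margYU_eq_sum_margU_mul hv1) fun w => margYU_eq_zero_of_margU_mul_eq_zero η hμ hv

theorem decKL_eq_zero_iff (hμ : ∀ x y, 0 ≤ μ x y) (hv0 : ∀ u y, 0 ≤ v u y)
    (hv1 : ∀ u, ∑ y, v u y = 1) (hv : ∀ u y, 0 < margYU μ η y u → 0 < v u y) :
    decKL μ η v = 0 ↔
      ∀ u, 0 < margU μ η u → ∀ y, v u y = margYU μ η y u / margU μ η u := by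
  rw [decKL_eq_sum_sum hμ, ← Fintype.sum_prod_type']
  refine (sum_mul_log_div_eq_zero_iff (fun w => margYU_nonneg η hμ w.2 w.1)
    (fun w => mul_nonneg (margU_nonneg η hμ w.1) (hv0 w.1 w.2))
    (sum_margYU_eq_sum_margU_mul hv1) fun w => margYU_eq_zero_of_margU_mul_eq_zero η hμ hv).trans
    (Prod.forall.trans (forall_congr' fun u => ?_))
  rcases (margU_nonneg η hμ u).eq_or_lt with hU | hU
  · simpa [← hU] using fun y => margYU_eq_zero_of_margU_mul_eq_zero η hμ hv (by simp [← hU])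
  · simp only [hU, true_implies, eq_div_iff hU.ne', mul_comm (margU μ η u), eq_comm]

end Decomposition

/-- `E[−log v(Y|η(X))] ≥ I(X;Y|U) + H(Y|X)`, with equality iff
`v(·|u) = μ_{Y|U}(·|u)` for every `u` with `μ_U(u) > 0`. -/
theorem stmt6 {X Y U : Type*} [Fintype X] [Fintype Y] [Fintype U] [DecidableEq U]
    (μ : X → Y → ℝ) (η : X → U) (v : U → Y → ℝ) (hμ : IsDist μ)
    (hv0 : ∀ u y, 0 ≤ v u y) (hv1 : ∀ u, ∑ y, v u y = 1)
    (hvpos : ∀ u y, 0 < margYU μ η y u → 0 < v u y) :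
    condMI μ η + condEnt μ ≤ risk μ (fun x y => v (η x) y) ∧
      (risk μ (fun x y => v (η x) y) = condMI μ η + condEnt μ ↔
        ∀ u, 0 < margU μ η u → ∀ y, v u y = margYU μ η y u / margU μ η u) := by
  rw [risk_comp_eq_condMI_add_condEnt_add_decKL hμ.1 hvpos, add_eq_left,
    ← decKL_eq_zero_iff hμ.1 hv0 hv1 hvpos]
  exact ⟨le_add_of_nonneg_right (decKL_nonneg hμ.1 hv0 hv1 hvpos), Iff.rfl⟩
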